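/- arXiv:2112.03211 — 2 statements merged into one kernel-verified Lean document; each statement's English description precedes it below -/
import Mathlib

section
/- Suppose conditionally on H = k (with H uniform on {0,...,N}), Alice's answer is Y = (H − E_fn) + E_fp, where E_fn ~ Binomial(k, p_H) and E_fp ~ Binomial(N−k, p_L) are independent. Then the event {Y = H} equals the event {E_fn = E_fp}, and hence P[Y = H] = (1 − (1 − u)^{N+1})/((N+1)u) where u = p_H + p_L > 0. -/
/-!
`Y = H` iff `E_fn = E_fp`, since `Y - H = E_fp - E_fn` in `ℤ`. For the probability, write
`T N = ∑_{k+m=N} P[Bin(k, a) = Bin(m, b)]` and `L N = ∑_{k+m=N} P[Bin(k, a) = Bin(m, b) + 1]`.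
Pascal's rule on the last trial of one of the two binomials couples them:
`T (N+1) = (1-a)^(N+1) + (1-b) T N + b L N` and `L (N+1) = (1-a) L N + a T N`, and solving this
linear recursion gives `(a + b) T N = 1 - (1-a-b)^(N+1)`. Averaging over the uniform `H` divides
by `N + 1`.

Nothing is assumed measurable, so `μ` acts as an outer measure on these events; additivity over
the fibres of `(H, E_fn, E_fp)` comes back because the fibre masses already add up to `1`.
-/

open MeasureTheory Finset
open scoped ENNReal

section Binomial

variable {R : Type*} [CommRing R]

def binomialWeight (p : R) (n i : ℕ) : R :=
  n.choose i * p ^ i * (1 - p) ^ (n - i)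

theorem binomialWeight_of_lt (p : R) {n i : ℕ} (h : n < i) : binomialWeight p n i = 0 := by
  simp [binomialWeight, Nat.choose_eq_zero_of_lt h]

theorem binomialWeight_zero_right (p : R) (n : ℕ) : binomialWeight p n 0 = (1 - p) ^ n := by
  simp [binomialWeight]

theorem binomialWeight_succ_succ (p : R) (n i : ℕ) :
    binomialWeight p (n + 1) (i + 1) =
      (1 - p) * binomialWeight p n (i + 1) + p * binomialWeight p n i := by
  rcases lt_or_ge i n with h | h
  · obtain ⟨d, rfl⟩ := Nat.exists_eq_add_of_lt h
    simp only [binomialWeight, Nat.choose_succ_succ, show i + d + 1 + 1 - (i + 1) = d + 1 by omega,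
      show i + d + 1 - (i + 1) = d by omega, show i + d + 1 - i = d + 1 by omega]
    push_cast
    ring
  · simp only [binomialWeight, Nat.choose_succ_succ, Nat.choose_eq_zero_of_lt (Nat.lt_succ_of_le h),
      Nat.succ_sub_succ]
    push_cast
    ring

theorem sum_binomialWeight (p : R) (n : ℕ) : ∑ i ∈ range (n + 1), binomialWeight p n i = 1 := by
  calc ∑ i ∈ range (n + 1), binomialWeight p n i = (p + (1 - p)) ^ n := by
        rw [add_pow]
        exact sum_congr rfl fun i _ => by rw [binomialWeight]; ring
    _ = 1 := by rw [add_sub_cancel, one_pow]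

def binomialTie (a b : R) (k m : ℕ) : R :=
  ∑ i ∈ range (k + 1), binomialWeight a k i * binomialWeight b m i

def binomialLead (a b : R) (k m : ℕ) : R :=
  ∑ i ∈ range (k + 1), binomialWeight a k (i + 1) * binomialWeight b m i

theorem binomialTie_zero_right (a b : R) (k : ℕ) : binomialTie a b k 0 = (1 - a) ^ k := by
  rw [binomialTie, sum_range_succ']
  simp [binomialWeight_of_lt b (Nat.succ_pos _), binomialWeight_zero_right]

theorem binomialLead_zero_left (a b : R) (m : ℕ) : binomialLead a b 0 m = 0 := by
  simp [binomialLead, binomialWeight_of_lt a (Nat.succ_pos 0)]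

theorem binomialTie_succ_right (a b : R) (k m : ℕ) :
    binomialTie a b k (m + 1) = (1 - b) * binomialTie a b k m + b * binomialLead a b k m := by
  rw [binomialTie, binomialTie, binomialLead, sum_range_succ' _ k, sum_range_succ' _ k,
    sum_range_succ _ k, binomialWeight_of_lt a (Nat.lt_succ_self k)]
  have hterm : ∀ i, binomialWeight a k (i + 1) * binomialWeight b (m + 1) (i + 1) =
      (1 - b) * (binomialWeight a k (i + 1) * binomialWeight b m (i + 1)) +
        b * (binomialWeight a k (i + 1) * binomialWeight b m i) := fun i => by
    rw [binomialWeight_succ_succ]; ring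
  simp only [hterm, sum_add_distrib, ← mul_sum, binomialWeight_zero_right]
  ring

theorem binomialLead_succ_left (a b : R) (k m : ℕ) :
    binomialLead a b (k + 1) m = (1 - a) * binomialLead a b k m + a * binomialTie a b k m := by
  rw [binomialTie, binomialLead, binomialLead, sum_range_succ _ (k + 1),
    binomialWeight_of_lt a (by omega : k + 1 < k + 1 + 1)]
  have hterm : ∀ i, binomialWeight a (k + 1) (i + 1) * binomialWeight b m i =
      (1 - a) * (binomialWeight a k (i + 1) * binomialWeight b m i) +
        a * (binomialWeight a k i * binomialWeight b m i) := fun i => by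
    rw [binomialWeight_succ_succ]; ring
  simp only [hterm, sum_add_distrib, ← mul_sum, sum_range_succ _ k,
    binomialWeight_of_lt a (Nat.lt_succ_self k)]
  ring

def tieSum (a b : R) (N : ℕ) : R :=
  ∑ q ∈ antidiagonal N, binomialTie a b q.1 q.2

def leadSum (a b : R) (N : ℕ) : R :=
  ∑ q ∈ antidiagonal N, binomialLead a b q.1 q.2

theorem tieSum_succ (a b : R) (N : ℕ) :
    tieSum a b (N + 1) = (1 - a) ^ (N + 1) + (1 - b) * tieSum a b N + b * leadSum a b N := by
  simp only [tieSum, leadSum, Nat.sum_antidiagonal_succ', binomialTie_zero_right,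
    binomialTie_succ_right, sum_add_distrib, ← mul_sum]
  ring

theorem leadSum_succ (a b : R) (N : ℕ) :
    leadSum a b (N + 1) = (1 - a) * leadSum a b N + a * tieSum a b N := by
  simp only [tieSum, leadSum, Nat.sum_antidiagonal_succ, binomialLead_zero_left,
    binomialLead_succ_left, sum_add_distrib, ← mul_sum, zero_add]

theorem add_mul_tieSum_and_leadSum (a b : R) (N : ℕ) :
    (a + b) * tieSum a b N = 1 - (1 - a - b) ^ (N + 1) ∧
      b * (a + b) * leadSum a b N =
        b + a * (1 - a - b) ^ (N + 1) - (b + a * (1 - a - b)) * (1 - a) ^ N := by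
  induction N with
  | zero =>
    simp only [tieSum, leadSum, Nat.antidiagonal_zero, sum_singleton, binomialTie_zero_right,
      binomialLead_zero_left]
    constructor <;> ring
  | succ N ih =>
    rw [tieSum_succ, leadSum_succ]
    exact ⟨by linear_combination (1 - b) * ih.1 + ih.2,
      by linear_combination (1 - a) * ih.2 + a * b * ih.1⟩

theorem add_mul_tieSum (a b : R) (N : ℕ) :
    (a + b) * tieSum a b N = 1 - (1 - a - b) ^ (N + 1) :=
  (add_mul_tieSum_and_leadSum a b N).1

end Binomial

theorem measure_preimage_eq_tsum_fibres {Ω ι : Type*} [MeasurableSpace Ω] [Countable ι]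
    (μ : Measure Ω) [IsFiniteMeasure μ] (g : Ω → ι)
    (hg : ∑' i, μ (g ⁻¹' {i}) ≤ μ Set.univ) (s : Set ι) :
    μ (g ⁻¹' s) = ∑' i : s, μ (g ⁻¹' {(i : ι)}) := by
  have hle : ∀ t : Set ι, μ (g ⁻¹' t) ≤ ∑' i : t, μ (g ⁻¹' {(i : ι)}) := fun t =>
    calc μ (g ⁻¹' t) = μ (⋃ i : t, g ⁻¹' {(i : ι)}) := by
          rw [← Set.preimage_iUnion, Set.iUnion_of_singleton_coe]
      _ ≤ _ := measure_iUnion_le _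
  have hcompl_ne_top : ∑' i : ↥sᶜ, μ (g ⁻¹' {(i : ι)}) ≠ ∞ :=
    ne_top_of_le_ne_top (measure_ne_top μ Set.univ)
      ((ENNReal.tsum_comp_le_tsum_of_injective Subtype.val_injective _).trans hg)
  refine le_antisymm (hle s) (ENNReal.le_of_add_le_add_right hcompl_ne_top ?_)
  calc ∑' i : s, μ (g ⁻¹' {(i : ι)}) + ∑' i : ↥sᶜ, μ (g ⁻¹' {(i : ι)})
      = ∑' i, μ (g ⁻¹' {i}) :=
        ENNReal.summable.tsum_add_tsum_compl (f := fun i => μ (g ⁻¹' {i})) ENNReal.summable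
    _ ≤ μ (g ⁻¹' s ∪ g ⁻¹' sᶜ) := by
        rwa [← Set.preimage_union, Set.union_compl_self, Set.preimage_univ]
    _ ≤ μ (g ⁻¹' s) + μ (g ⁻¹' sᶜ) := measure_union_le _ _
    _ ≤ μ (g ⁻¹' s) + ∑' i : ↥sᶜ, μ (g ⁻¹' {(i : ι)}) := add_le_add_right (hle sᶜ) _

theorem tsum_ite_le_eq_sum {M : Type*} [AddCommMonoid M] [TopologicalSpace M] (f : ℕ → M) (N : ℕ) :
    ∑' k, (if k ≤ N then f k else 0) = ∑ k ∈ range (N + 1), f k := by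
  rw [tsum_eq_sum (s := range (N + 1)) fun k hk => if_neg (by simpa [Nat.lt_succ_iff] using hk)]
  exact sum_congr rfl fun k hk => if_pos (Nat.lt_succ_iff.mp (mem_range.mp hk))

section Real

variable {a b : ℝ}

theorem binomialWeight_nonneg (ha : a ∈ Set.Icc (0 : ℝ) 1) (n i : ℕ) :
    0 ≤ binomialWeight a n i := by
  have : 0 ≤ 1 - a := sub_nonneg.mpr ha.2
  have := ha.1
  unfold binomialWeight
  positivity

theorem tsum_ofReal_binomialWeight (ha : a ∈ Set.Icc (0 : ℝ) 1) (n : ℕ) :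
    ∑' i, ENNReal.ofReal (binomialWeight a n i) = 1 := by
  rw [tsum_eq_sum (s := range (n + 1)) fun i hi => by
      rw [binomialWeight_of_lt a (by simpa using hi), ENNReal.ofReal_zero],
    ← ENNReal.ofReal_sum_of_nonneg fun i _ => binomialWeight_nonneg ha n i, sum_binomialWeight,
    ENNReal.ofReal_one]

theorem tsum_ofReal_mul_binomialWeight (ha : a ∈ Set.Icc (0 : ℝ) 1) (hb : b ∈ Set.Icc (0 : ℝ) 1)
    (k m : ℕ) :
    ∑' i, ENNReal.ofReal (binomialWeight a k i) * ENNReal.ofReal (binomialWeight b m i) =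
      ENNReal.ofReal (binomialTie a b k m) := by
  rw [tsum_eq_sum (s := range (k + 1)) fun i hi => by
      rw [binomialWeight_of_lt a (by simpa using hi), ENNReal.ofReal_zero, zero_mul],
    binomialTie, ENNReal.ofReal_sum_of_nonneg fun i _ =>
      mul_nonneg (binomialWeight_nonneg ha k i) (binomialWeight_nonneg hb m i)]
  exact sum_congr rfl fun i _ => (ENNReal.ofReal_mul (binomialWeight_nonneg ha k i)).symm

noncomputable def jointMass (N : ℕ) (a b : ℝ) (x : ℕ × ℕ × ℕ) : ℝ≥0∞ :=
  if x.1 ≤ N then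
    ((N : ℝ≥0∞) + 1)⁻¹ * ENNReal.ofReal (binomialWeight a x.1 x.2.1) *
      ENNReal.ofReal (binomialWeight b (N - x.1) x.2.2)
  else 0

theorem tsum_jointMass (ha : a ∈ Set.Icc (0 : ℝ) 1) (hb : b ∈ Set.Icc (0 : ℝ) 1) (N : ℕ) :
    ∑' x, jointMass N a b x = 1 := by
  have hrow : ∀ k, ∑' i, ∑' j, jointMass N a b (k, i, j) =
      if k ≤ N then ((N : ℝ≥0∞) + 1)⁻¹ else 0 := fun k => by
    split_ifs with hk
    · simp only [jointMass, if_pos hk, ENNReal.tsum_mul_left,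
        tsum_ofReal_binomialWeight ha, tsum_ofReal_binomialWeight hb, mul_one]
    · simp only [jointMass, if_neg hk, tsum_zero]
  rw [ENNReal.tsum_prod', tsum_congr fun k => ENNReal.tsum_prod', tsum_congr hrow,
    tsum_ite_le_eq_sum, sum_const, card_range, nsmul_eq_mul, Nat.cast_succ]
  exact ENNReal.mul_inv_cancel (by simp) (by simp)

theorem tsum_jointMass_diag (ha : a ∈ Set.Icc (0 : ℝ) 1) (hb : b ∈ Set.Icc (0 : ℝ) 1) (N : ℕ) :
    ∑' q : ℕ × ℕ, jointMass N a b (q.1, q.2, q.2) =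
      ENNReal.ofReal (tieSum a b N / (N + 1)) := by
  have hrow : ∀ k, ∑' i, jointMass N a b (k, i, i) =
      if k ≤ N then ((N : ℝ≥0∞) + 1)⁻¹ * ENNReal.ofReal (binomialTie a b k (N - k)) else 0 :=
    fun k => by
    split_ifs with hk
    · simp only [jointMass, if_pos hk, mul_assoc, ENNReal.tsum_mul_left,
        tsum_ofReal_mul_binomialWeight ha hb]
    · simp only [jointMass, if_neg hk, tsum_zero]
  have hnonneg : ∀ k m, 0 ≤ binomialTie a b k m := fun k m =>
    sum_nonneg fun i _ => mul_nonneg (binomialWeight_nonneg ha k i) (binomialWeight_nonneg hb m i)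
  have hN : ENNReal.ofReal ((N : ℝ) + 1) = (N : ℝ≥0∞) + 1 := by
    rw [← Nat.cast_succ, ENNReal.ofReal_natCast, Nat.cast_succ]
  rw [ENNReal.tsum_prod', tsum_congr hrow, tsum_ite_le_eq_sum, ← mul_sum,
    ENNReal.ofReal_div_of_pos (by positivity), hN, div_eq_mul_inv, mul_comm, tieSum,
    Nat.sum_antidiagonal_eq_sum_range_succ (fun k m => binomialTie a b k m),
    ENNReal.ofReal_sum_of_nonneg fun k _ => hnonneg _ _]

theorem measure_preimage_singleton_eq_jointMass {Ω : Type*} [MeasurableSpace Ω] (μ : Measure Ω)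
    {N : ℕ} {H E F : Ω → ℕ} (hH : ∀ ω, H ω ≤ N)
    (huni : ∀ k ≤ N, μ {ω | H ω = k} = 1 / ((N : ℝ≥0∞) + 1))
    (hcond : ∀ k ≤ N, ∀ i j : ℕ, μ ({ω | H ω = k} ∩ {ω | E ω = i} ∩ {ω | F ω = j}) =
      μ {ω | H ω = k} * ENNReal.ofReal (binomialWeight a k i) *
        ENNReal.ofReal (binomialWeight b (N - k) j))
    (x : ℕ × ℕ × ℕ) :
    μ ((fun ω => (H ω, E ω, F ω)) ⁻¹' {x}) = jointMass N a b x := by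
  obtain ⟨k, i, j⟩ := x
  by_cases hk : k ≤ N
  · have hfibre : (fun ω => (H ω, E ω, F ω)) ⁻¹' {(k, i, j)} =
        {ω | H ω = k} ∩ {ω | E ω = i} ∩ {ω | F ω = j} := by
      ext ω
      simp [and_assoc]
    rw [hfibre, hcond k hk, huni k hk, one_div, jointMass, if_pos hk]
  · have hempty : (fun ω => (H ω, E ω, F ω)) ⁻¹' {(k, i, j)} = ∅ :=
      Set.eq_empty_of_forall_notMem fun ω hω => hk ((congrArg Prod.fst hω).symm.trans_le (hH ω))
    rw [hempty, measure_empty, jointMass, if_neg hk]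

end Real

theorem stmt_15_general {Ω : Type*} [MeasurableSpace Ω] (μ : Measure Ω) [IsProbabilityMeasure μ]
    (N : ℕ) (pH pL : ℝ)
    (hpH : pH ∈ Set.Icc (0:ℝ) 1) (hpL : pL ∈ Set.Icc (0:ℝ) 1)
    (u : ℝ) (hu : u = pH + pL) (hupos : 0 < u)
    (H Efn Efp Y : Ω → ℕ)
    (hHr : ∀ ω, H ω ≤ N)
    (huni : ∀ k ≤ N, μ {ω | H ω = k} = 1 / ((N:ℝ≥0∞) + 1))
    -- conditionally on H = k, Efn and Efp are independent binomials (k, pH), (N - k, pL)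
    (hcond : ∀ k ≤ N, ∀ i j : ℕ,
      μ ({ω | H ω = k} ∩ {ω | Efn ω = i} ∩ {ω | Efp ω = j})
        = μ {ω | H ω = k}
          * ENNReal.ofReal ((k.choose i : ℝ) * pH ^ i * (1 - pH) ^ (k - i))
          * ENNReal.ofReal (((N - k).choose j : ℝ) * pL ^ j * (1 - pL) ^ (N - k - j)))
    (hY : ∀ ω, (Y ω : ℤ) = (H ω : ℤ) - (Efn ω : ℤ) + (Efp ω : ℤ)) :
    {ω | Y ω = H ω} = {ω | Efn ω = Efp ω} ∧
    μ {ω | Y ω = H ω}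
      = ENNReal.ofReal ((1 - (1 - u) ^ (N + 1)) / (((N:ℝ) + 1) * u)) := by
  have hevent : {ω | Y ω = H ω} = {ω | Efn ω = Efp ω} := by
    ext ω
    have := hY ω
    show Y ω = H ω ↔ Efn ω = Efp ω
    omega
  refine ⟨hevent, ?_⟩
  have hfibre := measure_preimage_singleton_eq_jointMass μ hHr huni hcond
  set g : Ω → ℕ × ℕ × ℕ := fun ω => (H ω, Efn ω, Efp ω)
  have hdiag : {ω | Efn ω = Efp ω} = g ⁻¹' Set.range fun q : ℕ × ℕ => (q.1, q.2, q.2) := by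
    ext ω
    simp [g]
  have htie : tieSum pH pL N = (1 - (1 - u) ^ (N + 1)) / u := by
    rw [eq_div_iff hupos.ne', hu]
    linear_combination add_mul_tieSum pH pL N
  rw [hevent, hdiag, measure_preimage_eq_tsum_fibres μ g (by simp [hfibre, tsum_jointMass hpH hpL]),
    tsum_range (fun x => μ (g ⁻¹' {x})) fun q q' h => by simpa [Prod.ext_iff] using h]
  simp only [hfibre, tsum_jointMass_diag hpH hpL, htie, div_div, mul_comm u]

theorem stmt_15 {Ω : Type*} [MeasurableSpace Ω] (μ : Measure Ω) [IsProbabilityMeasure μ]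
    (N : ℕ) (hN : 1 ≤ N) (pH pL : ℝ)
    (hpH : pH ∈ Set.Icc (0:ℝ) 1) (hpL : pL ∈ Set.Icc (0:ℝ) 1)
    (u : ℝ) (hu : u = pH + pL) (hupos : 0 < u)
    (H Efn Efp Y : Ω → ℕ)
    (hHr : ∀ ω, H ω ≤ N)
    (huni : ∀ k ≤ N, μ {ω | H ω = k} = 1 / ((N:ℝ≥0∞) + 1))
    -- conditionally on H = k, Efn and Efp are independent binomials (k, pH), (N - k, pL)
    (hcond : ∀ k ≤ N, ∀ i j : ℕ,
      μ ({ω | H ω = k} ∩ {ω | Efn ω = i} ∩ {ω | Efp ω = j})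
        = μ {ω | H ω = k}
          * ENNReal.ofReal ((k.choose i : ℝ) * pH ^ i * (1 - pH) ^ (k - i))
          * ENNReal.ofReal (((N - k).choose j : ℝ) * pL ^ j * (1 - pL) ^ (N - k - j)))
    (hY : ∀ ω, (Y ω : ℤ) = (H ω : ℤ) - (Efn ω : ℤ) + (Efp ω : ℤ)) :
    {ω | Y ω = H ω} = {ω | Efn ω = Efp ω} ∧
    μ {ω | Y ω = H ω}
      = ENNReal.ofReal ((1 - (1 - u) ^ (N + 1)) / (((N:ℝ) + 1) * u)) :=
  stmt_15_general μ N pH pL hpH hpL u hu hupos H Efn Efp Y hHr huni hcond hY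
end

section
/- For p, q ∈ [0,1] and n ≥ 1, the double sum γ_n = Σ_{k=0}^{n} Σ_{j=0}^{k} C(k,j) C(n−k,j) p^j(1−p)^{k−j} q^j(1−q)^{n−k−j} admits the closed form: if p + q ≠ 0 then γ_n = (1 − (1−p−q)^{n+1})/(p+q), and if p + q = 0 then γ_n = n+1. -/
/-!
With `a = 1 - x` and `b = 1 - y`, `coincidenceSum x a y b k l` is the probability that independent
`X ~ Bin(k, x)` and `Y ~ Bin(l, y)` agree, and `γ_n` is its sum over `k + l = n`. Pascal's rule in
`k` (resp. `l`) relates it to the probability that `Y = X + 1`, and eliminating the latter shows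
that its sums `S n` over `k + l = n` satisfy `S (n + 2) = (a + b) S (n + 1) - (a b - x y) S n`. For
`a = 1 - x`, `b = 1 - y` the characteristic roots are `1` and `1 - x - y`, so `S n` is the
geometric sum `∑_{m ≤ n} (1 - x - y) ^ m`.
-/

open Finset

lemma choose_succ_mul_pow_sub {R : Type*} [CommSemiring R] (a : R) (k j : ℕ) :
    (k.choose (j + 1) : R) * a ^ (k - j) = a * ((k.choose (j + 1) : R) * a ^ (k - (j + 1))) := by
  rcases lt_or_ge j k with hjk | hkj
  · rw [show k - j = k - (j + 1) + 1 by omega, pow_succ]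
    ring
  · simp [Nat.choose_eq_zero_of_lt (show k < j + 1 by omega)]

section Coincidence

variable {R : Type*} [CommRing R] (x a y b : R)

def coincidenceSum (k l : ℕ) : R :=
  ∑ j ∈ range (k + 1),
    (k.choose j : R) * (l.choose j : R) * x ^ j * a ^ (k - j) * y ^ j * b ^ (l - j)

def shiftedCoincidenceSum (k l : ℕ) : R :=
  ∑ j ∈ range (k + 1),
    (k.choose j : R) * (l.choose (j + 1) : R) * x ^ j * a ^ (k - j) * y ^ (j + 1) * b ^ (l - (j + 1))

def totalCoincidence (n : ℕ) : R :=
  ∑ kl ∈ antidiagonal n, coincidenceSum x a y b kl.1 kl.2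

def totalShiftedCoincidence (n : ℕ) : R :=
  ∑ kl ∈ antidiagonal n, shiftedCoincidenceSum x a y b kl.1 kl.2

lemma coincidenceSum_zero_left (l : ℕ) : coincidenceSum x a y b 0 l = b ^ l := by
  simp [coincidenceSum]

lemma shiftedCoincidenceSum_zero_right (k : ℕ) : shiftedCoincidenceSum x a y b k 0 = 0 := by
  simp [shiftedCoincidenceSum]

lemma coincidenceSum_succ_left (k l : ℕ) :
    coincidenceSum x a y b (k + 1) l =
      a * coincidenceSum x a y b k l + x * shiftedCoincidenceSum x a y b k l := by
  set t : ℕ → R := fun j =>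
    (k.choose j : R) * (l.choose j : R) * x ^ j * a ^ (k - j) * y ^ j * b ^ (l - j) with ht
  -- the summand of `coincidenceSum x a y b k l` vanishes at `j = k + 1`
  have extend : coincidenceSum x a y b k l = ∑ j ∈ range (k + 1), t (j + 1) + t 0 := by
    rw [← sum_range_succ', sum_range_succ, coincidenceSum]
    simp [ht, Nat.choose_succ_self]
  rw [extend, shiftedCoincidenceSum, mul_add, mul_sum, mul_sum, ← add_rotate, ← sum_add_distrib,
    coincidenceSum, sum_range_succ']
  congr 1
  · refine sum_congr rfl fun j _ => ?_
    rw [Nat.choose_succ_succ', Nat.add_sub_add_right, Nat.cast_add]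
    linear_combination
      (l.choose (j + 1) * x ^ (j + 1) * y ^ (j + 1) * b ^ (l - (j + 1)) : R) *
        choose_succ_mul_pow_sub a k j
  · simp only [ht, Nat.choose_zero_right, Nat.cast_one, mul_one, pow_zero, tsub_zero, pow_succ,
      one_mul]
    ring

lemma shiftedCoincidenceSum_succ_right (k l : ℕ) :
    shiftedCoincidenceSum x a y b k (l + 1) =
      b * shiftedCoincidenceSum x a y b k l + y * coincidenceSum x a y b k l := by
  rw [shiftedCoincidenceSum, shiftedCoincidenceSum, coincidenceSum, mul_sum, mul_sum,
    ← sum_add_distrib]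
  refine sum_congr rfl fun j _ => ?_
  rw [Nat.choose_succ_succ', Nat.add_sub_add_right, Nat.cast_add]
  linear_combination
    (k.choose j * x ^ j * a ^ (k - j) * y ^ (j + 1) : R) * choose_succ_mul_pow_sub b l j

lemma totalCoincidence_succ (n : ℕ) :
    totalCoincidence x a y b (n + 1) =
      b ^ (n + 1) + a * totalCoincidence x a y b n + x * totalShiftedCoincidence x a y b n := by
  simp only [totalCoincidence, totalShiftedCoincidence, Nat.sum_antidiagonal_succ,
    coincidenceSum_zero_left, coincidenceSum_succ_left, sum_add_distrib, mul_sum, add_assoc]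

lemma totalShiftedCoincidence_succ (n : ℕ) :
    totalShiftedCoincidence x a y b (n + 1) =
      b * totalShiftedCoincidence x a y b n + y * totalCoincidence x a y b n := by
  simp only [totalCoincidence, totalShiftedCoincidence, Nat.sum_antidiagonal_succ',
    shiftedCoincidenceSum_zero_right, shiftedCoincidenceSum_succ_right, sum_add_distrib, mul_sum,
    zero_add]

lemma totalCoincidence_add_two (n : ℕ) :
    totalCoincidence x a y b (n + 2) =
      (a + b) * totalCoincidence x a y b (n + 1) - (a * b - x * y) * totalCoincidence x a y b n := by
  linear_combination totalCoincidence_succ x a y b (n + 1) +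
    x * totalShiftedCoincidence_succ x a y b n - b * totalCoincidence_succ x a y b n

lemma totalCoincidence_one_sub (n : ℕ) :
    totalCoincidence x (1 - x) y (1 - y) n = ∑ m ∈ range (n + 1), (1 - x - y) ^ m := by
  induction n using Nat.twoStepInduction with
  | zero => simp [totalCoincidence, coincidenceSum_zero_left]
  | one =>
    rw [totalCoincidence_succ]
    simp only [totalCoincidence, totalShiftedCoincidence, Nat.antidiagonal_zero, sum_singleton,
      coincidenceSum_zero_left, shiftedCoincidenceSum_zero_right, sum_range_succ, sum_range_zero]
    ring
  | more n ih ih' =>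
    rw [totalCoincidence_add_two, ih, ih', sum_range_succ _ (n + 2), sum_range_succ _ (n + 1)]
    ring

end Coincidence

theorem stmt_19_general (n : ℕ) (p q : ℝ)
    (γ : ℝ)
    (hγ : γ = ∑ k ∈ Finset.range (n + 1), ∑ j ∈ Finset.range (k + 1),
      (k.choose j : ℝ) * ((n - k).choose j : ℝ) *
        p ^ j * (1 - p) ^ (k - j) * q ^ j * (1 - q) ^ (n - k - j)) :
    (p + q ≠ 0 → γ = (1 - (1 - p - q) ^ (n + 1)) / (p + q)) ∧
    (p + q = 0 → γ = (n : ℝ) + 1) := by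
  have hγ_geom : γ = ∑ m ∈ range (n + 1), (1 - p - q) ^ m := by
    rw [← totalCoincidence_one_sub, totalCoincidence, Nat.sum_antidiagonal_eq_sum_range_succ, hγ]
    rfl
  refine ⟨fun hpq => ?_, fun hpq => ?_⟩
  · have hratio : 1 - p - q ≠ 1 := fun h => hpq (by linarith)
    rw [hγ_geom, geom_sum_eq hratio, ← neg_div_neg_eq, neg_sub, neg_sub]
    congr 1
    ring
  · rw [hγ_geom, show 1 - p - q = 1 by linarith]
    simp

theorem stmt_19 (n : ℕ) (hn : 1 ≤ n) (p q : ℝ)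
    (hp : p ∈ Set.Icc (0:ℝ) 1) (hq : q ∈ Set.Icc (0:ℝ) 1)
    (γ : ℝ)
    (hγ : γ = ∑ k ∈ Finset.range (n + 1), ∑ j ∈ Finset.range (k + 1),
      (k.choose j : ℝ) * ((n - k).choose j : ℝ) *
        p ^ j * (1 - p) ^ (k - j) * q ^ j * (1 - q) ^ (n - k - j)) :
    (p + q ≠ 0 → γ = (1 - (1 - p - q) ^ (n + 1)) / (p + q)) ∧
    (p + q = 0 → γ = (n : ℝ) + 1) :=
  stmt_19_general n p q γ hγ
end
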